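/- For every n ≥ 0, the (n+1)×(n+1) submatrix of M_{2n} on the columns labeled 1, 2, ..., n+1 (entry in row i and column labeled j, for 0 ≤ i ≤ n and 1 ≤ j ≤ n+1, equal to C(2n+1-i, 2n+2-j) - C(i, 2n+2-j)) is upper triangular with all diagonal entries equal to 1; in particular its determinant equals 1, so {1, 2, ..., n+1} is a basis of the Dehn–Sommerville matroid DS_{2n} and the matrix M_{2n} has full row rank n+1. -/

import Mathlib

/-!
In row `i` and a column labelled `c ≤ i` of `M_{2n}`, the lower index `2n+2-c` exceeds both
`2n+1-i` and `i` (as `2i ≤ 2n`), so both binomials vanish; for `c = i+1` the entry is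
`C(2n+1-i, 2n+1-i) - C(i, 2n+1-i) = 1 - 0`.
Hence the columns `1, …, n+1` form an upper unitriangular block, of determinant `1`, which
forces the `(n+1)`-row matrix `M_{2n}` to have rank `n+1`.
-/

open Matrix

theorem Matrix.rank_eq_card_height_of_isUnit_det_submatrix {m n K : Type*} [Fintype m]
    [Fintype n] [DecidableEq m] [CommRing K] [StrongRankCondition K] (A : Matrix m n K)
    (c : m → n) (h : IsUnit (A.submatrix id c).det) : A.rank = Fintype.card m :=
  le_antisymm A.rank_le_card_height <|
    (rank_of_isUnit _ ((isUnit_iff_isUnit_det _).2 h)).symm.trans_le (rank_submatrix_le A id c)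

section DehnSommerville

variable (R : Type*) [CommRing R]

/-- The entry of `M_d` in row `i` and the column labelled `c`. -/
def dsEntry (d i c : ℕ) : R :=
  ((d + 1 - i).choose (d + 2 - c) : R) - (i.choose (d + 2 - c) : R)

/-- The Dehn–Sommerville matrix `M_{2n}`, with `Fin` indices shifted by one for the column labels. -/
def dsEvenMatrix (n : ℕ) : Matrix (Fin (n + 1)) (Fin (2 * n + 1)) R :=
  of fun i j => dsEntry R (2 * n) i (j + 1)

def dsEvenInitialSubmatrix (n : ℕ) : Matrix (Fin (n + 1)) (Fin (n + 1)) R :=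
  of fun i j => dsEntry R (2 * n) i (j + 1)

variable {R}

theorem dsEntry_eq_zero_of_le {d i c : ℕ} (hi : 2 * i ≤ d) (hc : c ≤ i) : dsEntry R d i c = 0 := by
  rw [dsEntry, Nat.choose_eq_zero_of_lt (by omega), Nat.choose_eq_zero_of_lt (by omega), sub_self]

theorem dsEntry_succ_self {d i : ℕ} (hi : 2 * i ≤ d) : dsEntry R d i (i + 1) = 1 := by
  rw [dsEntry, show d + 2 - (i + 1) = d + 1 - i by omega, Nat.choose_self,
    Nat.choose_eq_zero_of_lt (by omega)]
  simp

theorem dsEvenInitialSubmatrix_isUpperTriangular (n : ℕ) :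
    (dsEvenInitialSubmatrix R n).IsUpperTriangular := fun i _ hji =>
  dsEntry_eq_zero_of_le (by omega) hji

theorem dsEvenInitialSubmatrix_diag (n : ℕ) (i : Fin (n + 1)) :
    dsEvenInitialSubmatrix R n i i = 1 :=
  dsEntry_succ_self (by omega)

theorem det_dsEvenInitialSubmatrix (n : ℕ) : (dsEvenInitialSubmatrix R n).det = 1 := by
  rw [det_of_isUpperTriangular (dsEvenInitialSubmatrix_isUpperTriangular n)]
  simp only [dsEvenInitialSubmatrix_diag, Finset.prod_const_one]

theorem dsEvenMatrix_submatrix_castLE (n : ℕ) :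
    (dsEvenMatrix R n).submatrix id (Fin.castLE (by omega)) = dsEvenInitialSubmatrix R n :=
  rfl

theorem rank_dsEvenMatrix [StrongRankCondition R] (n : ℕ) : (dsEvenMatrix R n).rank = n + 1 := by
  rw [(dsEvenMatrix R n).rank_eq_card_height_of_isUnit_det_submatrix (Fin.castLE (by omega)),
    Fintype.card_fin]
  rw [dsEvenMatrix_submatrix_castLE, det_dsEvenInitialSubmatrix]
  exact isUnit_one

end DehnSommerville

/-- **Lemma (initial columns form a basis).**
For every `n ≥ 0`, the `(n+1)×(n+1)` submatrix of the Dehn–Sommerville matrix `M_{2n}`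
on the columns labeled `1,…,n+1` (entry in row `i`, column labeled `j+1` for `j : Fin (n+1)`:
`C(2n+1-i, 2n+2-(j+1)) - C(i, 2n+2-(j+1))`) is upper triangular with all diagonal entries
equal to `1`; in particular its determinant is `1`, so `{1,…,n+1}` is a basis of the
Dehn–Sommerville matroid `DS_{2n}`, and the full matrix `M_{2n}` has row rank `n+1`. -/
theorem dsEven_initial_submatrix (n : ℕ) :
    (∀ i j : Fin (n + 1), (j : ℕ) < (i : ℕ) →
        ((Nat.choose (2 * n + 1 - (i : ℕ)) (2 * n + 2 - ((j : ℕ) + 1)) : ℤ)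
          - (Nat.choose (i : ℕ) (2 * n + 2 - ((j : ℕ) + 1)) : ℤ)) = 0)
    ∧ (∀ i : Fin (n + 1),
        ((Nat.choose (2 * n + 1 - (i : ℕ)) (2 * n + 2 - ((i : ℕ) + 1)) : ℤ)
          - (Nat.choose (i : ℕ) (2 * n + 2 - ((i : ℕ) + 1)) : ℤ)) = 1)
    ∧ Matrix.det (fun i j : Fin (n + 1) =>
        ((Nat.choose (2 * n + 1 - (i : ℕ)) (2 * n + 2 - ((j : ℕ) + 1)) : ℤ)
          - (Nat.choose (i : ℕ) (2 * n + 2 - ((j : ℕ) + 1)) : ℤ))) = 1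
    ∧ Matrix.rank (Matrix.of fun (i : Fin (n + 1)) (j : Fin (2 * n + 1)) =>
        ((Nat.choose (2 * n + 1 - (i : ℕ)) (2 * n + 2 - ((j : ℕ) + 1)) : ℚ)
          - (Nat.choose (i : ℕ) (2 * n + 2 - ((j : ℕ) + 1)) : ℚ))) = n + 1 :=
  ⟨dsEvenInitialSubmatrix_isUpperTriangular n, dsEvenInitialSubmatrix_diag n,
    det_dsEvenInitialSubmatrix n, rank_dsEvenMatrix n⟩
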